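/- arXiv:1110.5166 — 7 statements merged into one kernel-verified Lean document; each statement's English description precedes it below -/
import Mathlib

section
/- Let B be a basis of a matroid M, let x and y be distinct elements not in B, and suppose b ∈ C(x,B) ∩ C(y,B), where C(z,B) denotes the unique (fundamental) circuit contained in B + z. Then B_{b,x} := B - b + x is a basis, and the fundamental circuit of y with respect to B_{b,x} satisfies C(x,B) △ C(y,B) ⊆ C(y, B_{b,x}) ⊆ C(x,B) ∪ C(y,B), where △ denotes symmetric difference. -/
open Set

variable {α : Type*}

/-- A circuit: a minimal dependent set. -/
def IsCircuit (M : Matroid α) (C : Set α) : Prop :=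
  M.Dep C ∧ ∀ D, D ⊂ C → M.Indep D

/-- `C` is the fundamental circuit of `x` with respect to the basis `B`:
the unique circuit contained in `B ∪ {x}`. -/
def IsFundCct (M : Matroid α) (C : Set α) (x : α) (B : Set α) : Prop :=
  IsCircuit M C ∧ x ∈ C ∧ C ⊆ insert x B

/-- `SymEx M a A B` : the elements `b ∈ B` such that `A - a + b` and `B - b + a` are bases. -/
def SymEx (M : Matroid α) (a : α) (A B : Set α) : Set α :=
  {b ∈ B | M.IsBase (insert b (A \ {a})) ∧ M.IsBase (insert a (B \ {b}))}

/-- `ConnEx M a a' A B` : the elements `b ∈ B` such that `A - a' + b` and `B - b + a` are bases. -/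
def ConnEx (M : Matroid α) (a a' : α) (A B : Set α) : Set α :=
  {b ∈ B | M.IsBase (insert b (A \ {a'})) ∧ M.IsBase (insert a (B \ {b}))}

/-- A binary matroid, via the circuit characterization: the symmetric difference of
any two distinct circuits contains a circuit. -/
def Binary (M : Matroid α) : Prop :=
  ∀ C₁ C₂, IsCircuit M C₁ → IsCircuit M C₂ → C₁ ≠ C₂ →
    ∃ C, IsCircuit M C ∧ C ⊆ symmDiff C₁ C₂

/-- A hyperplane: a maximal proper flat. -/
def IsHyperplane (M : Matroid α) (H : Set α) : Prop :=
  M.IsFlat H ∧ H ≠ M.E ∧ ∀ F, M.IsFlat F → H ⊂ F → F = M.E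

/-! The only circuit in `B + x` is `C(x,B)`, and it contains `b`, so `B - b + x` is independent,
hence a basis. Eliminating `b` from `C(x,B)` and `C(y,B)` gives a circuit in `B_{b,x} + y`,
which must be `C(y,B_{b,x})`: this is the upper bound. For the lower bound, strong elimination
of `x` between `C(x,B)` and `C(y,B_{b,x})` puts each `f ∈ C(x,B) \ C(y,B_{b,x})` in a circuit
of `B + y`, that is, in `C(y,B)`; symmetrically with the roles of `x` and `y` exchanged. -/

theorem isCircuit_iff_matroid_isCircuit {M : Matroid α} {C : Set α} :
    IsCircuit M C ↔ M.IsCircuit C :=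
  Matroid.isCircuit_iff_forall_ssubset.symm

namespace Matroid

variable {M : Matroid α} {B I C D K : Set α} {b e x z : α}

theorem IsCircuit.eq_of_subset_insert (hC : M.IsCircuit C) (hD : M.IsCircuit D) (hI : M.Indep I)
    (hCI : C ⊆ insert e I) (hDI : D ⊆ insert e I) : C = D :=
  (hC.eq_fundCircuit_of_subset hI hCI).trans (hD.eq_fundCircuit_of_subset hI hDI).symm

theorem IsBase.exchange_isBase_of_mem_isCircuit (hB : M.IsBase B) (hx : x ∉ B)
    (hC : M.IsCircuit C) (hCB : C ⊆ insert x B) (hbB : b ∈ B) (hbC : b ∈ C) :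
    M.IsBase (insert x (B \ {b})) := by
  have hxC : x ∈ C := by
    by_contra hxC
    exact hC.not_indep (hB.indep.subset ((subset_insert_iff_of_notMem hxC).1 hCB))
  refine hB.exchange_isBase_of_indep hx (indep_iff_forall_subset_not_isCircuit'.2 ⟨?_, ?_⟩)
  · intro D hD hDc
    have hDC : D = C := hDc.eq_of_subset_insert hC hB.indep
      (hD.trans (insert_subset_insert sdiff_subset)) hCB
    rcases hD (hDC ▸ hbC) with rfl | hb
    · exact hx hbB
    · exact hb.2 rfl
  · exact insert_subset (hC.subset_ground hxC) (sdiff_subset.trans hB.subset_ground)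

theorem IsCircuit.sdiff_subset_of_union_sdiff_subset_insert (hC : M.IsCircuit C)
    (hD : M.IsCircuit D) (heC : e ∈ C) (heD : e ∈ D) (hI : M.Indep I)
    (hCD : (C ∪ D) \ {e} ⊆ insert z I) (hK : M.IsCircuit K) (hKI : K ⊆ insert z I) :
    C \ D ⊆ K := by
  rintro f ⟨hfC, hfD⟩
  obtain ⟨C', hC'sub, hC', hfC'⟩ := hC.strong_elimination hD heC heD hfC hfD
  exact hC'.eq_of_subset_insert hK hI (hC'sub.trans hCD) hKI ▸ hfC'

end Matroid

theorem stmt_0_general (M : Matroid α) {B Cx Cy : Set α} {x y b : α}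
    (hB : M.IsBase B) (hx : x ∉ B) (hy : y ∉ B) (hxy : x ≠ y)
    (hCx : IsFundCct M Cx x B) (hCy : IsFundCct M Cy y B)
    (hbx : b ∈ Cx) (hby : b ∈ Cy) :
    M.IsBase (insert x (B \ {b})) ∧
      ∀ Cy', IsFundCct M Cy' y (insert x (B \ {b})) →
        symmDiff Cx Cy ⊆ Cy' ∧ Cy' ⊆ Cx ∪ Cy := by
  obtain ⟨hCx, hxCx, hCxB⟩ := hCx
  obtain ⟨hCy, hyCy, hCyB⟩ := hCy
  rw [isCircuit_iff_matroid_isCircuit] at hCx hCy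
  have hxCy : x ∉ Cy := fun h ↦ (hCyB h).elim hxy hx
  have hbB : b ∈ B := (hCxB hbx).resolve_left (by rintro rfl; exact hxCy hby)
  have hB' := hB.exchange_isBase_of_mem_isCircuit hx hCx hCxB hbB hbx
  refine ⟨hB', fun Cy' ⟨hCy', hyCy', hCy'B'⟩ ↦ ?_⟩
  rw [isCircuit_iff_matroid_isCircuit] at hCy'
  have hbCy' : b ∉ Cy' := by
    intro h
    rcases hCy'B' h with rfl | rfl | h
    · exact hy hbB
    · exact hx hbB
    · exact h.2 rfl
  have hxCy' : x ∈ Cy' := by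
    by_contra hxCy'
    have hCy'B : Cy' ⊆ insert y B := by grind
    exact hbCy' (hCy'.eq_of_subset_insert hCy hB.indep hCy'B hCyB ▸ hby)
  have hCxCy : Cx \ Cy' ⊆ Cy :=
    hCx.sdiff_subset_of_union_sdiff_subset_insert hCy' hxCx hxCy' hB.indep (by grind) hCy hCyB
  have hCyCx : Cy \ Cy' ⊆ Cx :=
    hCy.sdiff_subset_of_union_sdiff_subset_insert hCy' hyCy hyCy' hB.indep (by grind) hCx hCxB
  obtain ⟨C, hCsub, hC⟩ := hCx.elimination hCy (fun h ↦ hxCy (h ▸ hxCx)) b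
  have hCCy' : C = Cy' := hC.eq_of_subset_insert hCy' hB'.indep (by grind) hCy'B'
  refine ⟨?_, hCCy' ▸ hCsub.trans sdiff_subset⟩
  rw [symmDiff_def]
  exact union_subset (sdiff_subset_comm.1 hCxCy) (sdiff_subset_comm.1 hCyCx)

theorem stmt_0 (M : Matroid α) [M.Finite] {B Cx Cy : Set α} {x y b : α}
    (hB : M.IsBase B) (hx : x ∉ B) (hy : y ∉ B) (hxy : x ≠ y)
    (hCx : IsFundCct M Cx x B) (hCy : IsFundCct M Cy y B)
    (hbx : b ∈ Cx) (hby : b ∈ Cy) :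
    M.IsBase (insert x (B \ {b})) ∧
      ∀ Cy', IsFundCct M Cy' y (insert x (B \ {b})) →
        symmDiff Cx Cy ⊆ Cy' ∧ Cy' ⊆ Cx ∪ Cy :=
  stmt_0_general M hB hx hy hxy hCx hCy hbx hby
end

section
/- Let A and B be disjoint bases of a block matroid M (ground set A ∪ B) and let a ∈ A. Then Sym(a,A,B) = (C(a,B) ∩ C*(a,B)) - a, where Sym(a,A,B) = {b ∈ B : A - a + b and B - b + a are both bases}. -/
open Set

variable {α : Type*}

/-! For `b ∈ B`, the set `B - b + a` is a base exactly when `b` lies on the fundamental circuit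
`C(a, B)`. Its complement is `A - a + b`, which is therefore a base exactly when `B - b + a` is a
base of the dual, i.e. when `b` lies on the fundamental cocircuit `C*(a, B)`. -/

lemma IsCircuit.isCircuit {M : Matroid α} {C : Set α} (h : IsCircuit M C) : M.IsCircuit C :=
  Matroid.isCircuit_iff_forall_ssubset.2 ⟨h.1, fun I hI ↦ h.2 I hI⟩

lemma IsFundCct.eq_fundCircuit {M : Matroid α} {C I : Set α} {x : α} (h : IsFundCct M C x I)
    (hI : M.Indep I) : C = M.fundCircuit x I :=
  h.1.isCircuit.eq_fundCircuit_of_subset hI h.2.2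

lemma Matroid.IsBase.insert_sdiff_singleton_isBase_iff {M : Matroid α} {B : Set α} {x b : α}
    (hB : M.IsBase B) (hxE : x ∈ M.E) (hxB : x ∉ B) (hb : b ∈ B) :
    M.IsBase (insert x (B \ {b})) ↔ b ∈ M.fundCircuit x B := by
  rw [hB.indep.mem_fundCircuit_iff (by rwa [hB.closure_eq]) hxB,
    ← insert_sdiff_singleton_comm (ne_of_mem_of_not_mem hb hxB).symm]
  exact ⟨Matroid.IsBase.indep, hB.exchange_isBase_of_indep hxB⟩

lemma union_sdiff_insert_sdiff_singleton {A B : Set α} {a b : α} (hAB : Disjoint A B)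
    (ha : a ∈ A) (hb : b ∈ B) : (A ∪ B) \ insert a (B \ {b}) = insert b (A \ {a}) := by
  ext x
  have hxAB : x ∈ A → x ∉ B := fun hx ↦ hAB.notMem_of_mem_left hx
  simp only [mem_sdiff, mem_union, mem_insert_iff, mem_singleton_iff]
  grind

theorem stmt_3_general (M : Matroid α) {A B Ca Cs : Set α} {a : α}
    (hA : M.IsBase A) (hB : M.IsBase B) (hAB : Disjoint A B) (hE : M.E = A ∪ B)
    (ha : a ∈ A) (hCa : IsFundCct M Ca a B) (hCs : IsFundCct M✶ Cs a B) :
    SymEx M a A B = (Ca ∩ Cs) \ {a} := by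
  have haB : a ∉ B := hAB.notMem_of_mem_left ha
  have haE : a ∈ M.E := hE ▸ Or.inl ha
  have hBd : M✶.IsBase B := by
    simpa only [hE, union_sdiff_left, hAB.sdiff_eq_right] using hA.compl_isBase_dual
  rw [hCa.eq_fundCircuit hB.indep, hCs.eq_fundCircuit hBd.indep]
  ext b
  by_cases hb : b ∈ B
  · have hba : b ≠ a := ne_of_mem_of_not_mem hb haB
    have hdual : M✶.IsBase (insert a (B \ {b})) ↔ M.IsBase (insert b (A \ {a})) := by
      rw [Matroid.dual_isBase_iff (insert_subset haE (sdiff_subset.trans hBd.subset_ground)),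
        hE, union_sdiff_insert_sdiff_singleton hAB ha hb]
    simp only [SymEx, mem_ofPred_eq, mem_sdiff, mem_inter_iff, mem_singleton_iff, hb, hba,
      not_false_eq_true, true_and, and_true, ← hdual,
      ← hB.insert_sdiff_singleton_isBase_iff haE haB hb,
      ← hBd.insert_sdiff_singleton_isBase_iff haE haB hb]
    exact and_comm
  · refine iff_of_false (fun h ↦ hb h.1) fun h ↦ hb ?_
    exact (M.fundCircuit_subset_insert a B h.1.1).resolve_left h.2

theorem stmt_3 (M : Matroid α) [M.Finite] {A B Ca Cs : Set α} {a : α}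
    (hA : M.IsBase A) (hB : M.IsBase B) (hAB : Disjoint A B) (hE : M.E = A ∪ B)
    (ha : a ∈ A) (hCa : IsFundCct M Ca a B) (hCs : IsFundCct M✶ Cs a B) :
    SymEx M a A B = (Ca ∩ Cs) \ {a} :=
  stmt_3_general M hA hB hAB hE ha hCa hCs
end

section
/- Let A and B be disjoint bases of a block matroid M (ground set A ∪ B) and let a, a' be distinct elements of A. Then Conn(a,a',A,B) = C(a,B) ∩ C*(a',B), where Conn(a,a',A,B) = {b ∈ B : A - a' + b and B - b + a are bases}. -/
open Set

variable {α : Type*}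

/-! An element `b ∈ B` lies in the fundamental circuit of `x` with respect to a base `B` exactly
when `B - b + x` is again a base. Applied in `M` this identifies `C(a,B) ∩ B` with the `b` for which
`B - b + a` is a base; applied in `M✶` it identifies `C*(a',B) ∩ B` with the `b` for which
`B - b + a'` is a cobase, i.e. its complement `A - a' + b` is a base. Since `C(a,B) ⊆ B + a`,
`C*(a',B) ⊆ B + a'` and `a ≠ a'`, the intersection lies in `B`. -/

namespace IsFundCct

variable {M : Matroid α} {C B : Set α} {x b : α}

lemma isCircuit (hC : IsFundCct M C x B) : M.IsCircuit C :=
  Matroid.isCircuit_iff_forall_ssubset.2 hC.1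

lemma notMem_of_indep (hC : IsFundCct M C x B) (hB : M.Indep B) : x ∉ B := fun hxB ↦
  hC.isCircuit.not_indep (hB.subset (hC.2.2.trans (insert_eq_of_mem hxB).subset))

lemma eq_fundCircuit_s4 (hC : IsFundCct M C x B) (hB : M.Indep B) : C = M.fundCircuit x B :=
  hC.isCircuit.eq_fundCircuit_of_subset hB hC.2.2

lemma mem_iff_isBase_insert_sdiff (hC : IsFundCct M C x B) (hB : M.IsBase B) (hb : b ∈ B) :
    b ∈ C ↔ M.IsBase (insert x (B \ {b})) := by
  have hxB := hC.notMem_of_indep hB.indep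
  have hxE : x ∈ M.E := hC.isCircuit.subset_ground hC.2.1
  have hxb : x ≠ b := ne_of_mem_of_not_mem hb hxB |>.symm
  rw [hC.eq_fundCircuit_s4 hB.indep,
    hB.indep.mem_fundCircuit_iff (by rwa [hB.closure_eq]) hxB,
    ← insert_sdiff_singleton_comm hxb]
  exact ⟨hB.exchange_isBase_of_indep hxB, Matroid.IsBase.indep⟩

end IsFundCct

lemma dual_isBase_insert_sdiff_iff {M : Matroid α} {A B : Set α} {a b : α}
    (hE : M.E = A ∪ B) (hAB : Disjoint A B) (ha : a ∈ A) (hb : b ∈ B) :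
    M✶.IsBase (insert a (B \ {b})) ↔ M.IsBase (insert b (A \ {a})) := by
  have hsub : insert a (B \ {b}) ⊆ M.E := by
    rw [hE]; exact insert_subset (.inl ha) (sdiff_subset.trans subset_union_right)
  rw [Matroid.dual_isBase_iff hsub, hE, union_sdiff_insert_sdiff_singleton hAB ha hb]

theorem stmt_4_general (M : Matroid α) {A B Ca Cs' : Set α} {a a' : α}
    (hA : M.IsBase A) (hB : M.IsBase B) (hAB : Disjoint A B) (hE : M.E = A ∪ B)
    (ha : a ∈ A) (ha' : a' ∈ A) (hne : a ≠ a')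
    (hCa : IsFundCct M Ca a B) (hCs' : IsFundCct M✶ Cs' a' B) :
    ConnEx M a a' A B = Ca ∩ Cs' := by
  have hB' : M✶.IsBase B := by
    rwa [Matroid.dual_isBase_iff, hE, union_sdiff_right, hAB.sdiff_eq_left]
  have hCs'_iff : ∀ b ∈ B, b ∈ Cs' ↔ M.IsBase (insert b (A \ {a'})) := fun b hb ↦ by
    rw [hCs'.mem_iff_isBase_insert_sdiff hB' hb, dual_isBase_insert_sdiff_iff hE hAB ha' hb]
  ext b
  refine ⟨fun ⟨hb, hAb, hBb⟩ ↦ ?_, fun ⟨hbCa, hbCs'⟩ ↦ ?_⟩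
  · exact ⟨(hCa.mem_iff_isBase_insert_sdiff hB hb).2 hBb, (hCs'_iff b hb).2 hAb⟩
  · have hb : b ∈ B := by
      have haB := hAB.notMem_of_mem_left ha
      rcases hCa.2.2 hbCa with rfl | hb
      · exact (haB ((hCs'.2.2 hbCs').resolve_left hne)).elim
      · exact hb
    exact ⟨hb, (hCs'_iff b hb).1 hbCs', (hCa.mem_iff_isBase_insert_sdiff hB hb).1 hbCa⟩

theorem stmt_4 (M : Matroid α) [M.Finite] {A B Ca Cs' : Set α} {a a' : α}
    (hA : M.IsBase A) (hB : M.IsBase B) (hAB : Disjoint A B) (hE : M.E = A ∪ B)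
    (ha : a ∈ A) (ha' : a' ∈ A) (hne : a ≠ a')
    (hCa : IsFundCct M Ca a B) (hCs' : IsFundCct M✶ Cs' a' B) :
    ConnEx M a a' A B = Ca ∩ Cs' :=
  stmt_4_general M hA hB hAB hE ha ha' hne hCa hCs'
end

section
/- For any two disjoint bases A and B of a matroid M and any two distinct elements a, a' ∈ A, the set Conn(a,a',A,B) = {b ∈ B : A - a' + b and B - b + a are bases} does not have cardinality exactly 1. -/
open Set

variable {α : Type*}

/-! Write `H = cl(A - a')`. Then `A - a' + b` is a base iff `b ∉ H`, and `B - b + a` is a base iff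
`b` lies in the fundamental circuit `C` of `a` with respect to `B`. Since `a ∈ H`, this gives
`Conn(a, a', A, B) = C \ H`. But no circuit has exactly one element outside a flat: that element
would lie in the closure of the others, hence in the flat. -/

namespace Matroid

variable {M : Matroid α} {B C F : Set α} {e f : α}

lemma IsBase.insert_sdiff_singleton_isBase_iff_s5 (hB : M.IsBase B) (hf : f ∉ B) :
    M.IsBase (insert f (B \ {e})) ↔ f ∈ M.E \ M.closure (B \ {e}) := by
  rw [← (hB.indep.subset sdiff_subset).insert_indep_iff_of_notMem fun h ↦ hf h.1]
  exact ⟨IsBase.indep, hB.exchange_isBase_of_indep hf⟩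

lemma IsBase.mem_fundCircuit_iff (hB : M.IsBase B) (heE : e ∈ M.E) (heB : e ∉ B) (hf : f ∈ B) :
    f ∈ M.fundCircuit e B ↔ M.IsBase (insert e (B \ {f})) := by
  rw [hB.indep.mem_fundCircuit_iff (by rwa [hB.closure_eq]) heB,
    ← insert_sdiff_singleton_comm (ne_of_mem_of_not_mem hf heB).symm]
  exact ⟨hB.exchange_isBase_of_indep heB, IsBase.indep⟩

lemma IsCircuit.encard_sdiff_ne_one_of_isFlat (hC : M.IsCircuit C) (hF : M.IsFlat F) :
    (C \ F).encard ≠ 1 := by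
  intro h
  obtain ⟨e, he⟩ := encard_eq_one.mp h
  have heCF : e ∈ C \ F := he ▸ rfl
  have hCF : C \ {e} ⊆ F := fun x hx ↦
    by_contra fun hxF ↦ hx.2 (he.subset ⟨hx.1, hxF⟩)
  exact heCF.2 (hF.closure ▸ M.closure_subset_closure hCF
    (hC.mem_closure_sdiff_singleton_of_mem heCF.1))

end Matroid

lemma connEx_eq_fundCircuit_sdiff_closure {M : Matroid α} {A B : Set α} {a a' : α}
    (hA : M.IsBase A) (hB : M.IsBase B) (hAB : Disjoint A B)
    (ha : a ∈ A) (hne : a ≠ a') :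
    ConnEx M a a' A B = M.fundCircuit a B \ M.closure (A \ {a'}) := by
  have haB : a ∉ B := hAB.notMem_of_mem_left ha
  have haE : a ∈ M.E := hA.subset_ground ha
  ext b
  by_cases hbB : b ∈ B
  · simp only [ConnEx, mem_ofPred_eq, mem_sdiff, hbB, true_and,
      hA.insert_sdiff_singleton_isBase_iff_s5 (hAB.notMem_of_mem_right hbB),
      ← hB.mem_fundCircuit_iff haE haB hbB, hB.subset_ground hbB]
    exact and_comm
  · have haH : a ∈ M.closure (A \ {a'}) :=
      M.subset_closure _ (sdiff_subset.trans hA.subset_ground) ⟨ha, hne⟩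
    simp only [ConnEx, mem_ofPred_eq, hbB, false_and, false_iff, mem_sdiff, not_and, not_not]
    intro hb
    obtain rfl | hb := M.fundCircuit_subset_insert a B hb
    · exact haH
    · exact absurd hb hbB

theorem stmt_5_general (M : Matroid α) {A B : Set α} {a a' : α}
    (hA : M.IsBase A) (hB : M.IsBase B) (hAB : Disjoint A B)
    (ha : a ∈ A) (hne : a ≠ a') :
    (ConnEx M a a' A B).encard ≠ 1 := by
  rw [connEx_eq_fundCircuit_sdiff_closure hA hB hAB ha hne]
  exact (hB.fundCircuit_isCircuit (hA.subset_ground ha) (hAB.notMem_of_mem_left ha)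
    ).encard_sdiff_ne_one_of_isFlat (M.isFlat_closure _)

theorem stmt_5 (M : Matroid α) [M.Finite] {A B : Set α} {a a' : α}
    (hA : M.IsBase A) (hB : M.IsBase B) (hAB : Disjoint A B)
    (ha : a ∈ A) (ha' : a' ∈ A) (hne : a ≠ a') :
    (ConnEx M a a' A B).encard ≠ 1 :=
  stmt_5_general M hA hB hAB ha hne
end

section
/- Let A and B be disjoint bases of a matroid M, let a ∈ A, and let b ∈ Sym(a,A,B), so A' := A - a + b and B' := B - b + a are bases. Let a' ∈ A - a. If b ∉ C(a',B) and a' ∉ C(b,A), then Sym(a', A', B') = Sym(a', A, B). -/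
open Set

variable {α : Type*}

namespace Matroid

variable {M : Matroid α} {C D T : Set α} {p q : α}

theorem IsBase.isBase_insert_sdiff_iff_mem_of_isCircuit (hT : M.IsBase T) (hC : M.IsCircuit C)
    (hCT : C ⊆ insert q T) (hqT : q ∉ T) (hpT : p ∈ T) :
    M.IsBase (insert q (T \ {p})) ↔ p ∈ C := by
  have hqC : q ∈ C := by_contra fun h ↦
    hC.not_indep (hT.indep.subset ((subset_insert_iff_of_notMem h).1 hCT))
  have hqE : q ∈ M.closure T := hT.closure_eq ▸ hC.subset_ground hqC
  rw [hC.eq_fundCircuit_of_subset hT.indep hCT, hT.indep.mem_fundCircuit_iff hqE hqT,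
    insert_sdiff_singleton_comm (ne_of_mem_of_not_mem hpT hqT).symm]
  exact ⟨IsBase.indep, hT.exchange_isBase_of_indep' hpT hqT⟩

theorem IsCircuit.isBase_insert_iff_isBase_insert (hC : M.IsCircuit C)
    (hCD : C ⊆ insert p (insert q D)) (hp : p ∈ C) (hq : q ∈ C) (hpD : p ∉ D) (hqD : q ∉ D) :
    M.IsBase (insert p D) ↔ M.IsBase (insert q D) := by
  obtain rfl | hpq := eq_or_ne p q
  · rfl
  have exchange : ∀ {p q}, p ≠ q → C ⊆ insert p (insert q D) → p ∈ C → p ∉ D → q ∉ D →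
      M.IsBase (insert p D) → M.IsBase (insert q D) := by
    intro p q hpq hCD hp hpD hqD hB
    have := (hB.isBase_insert_sdiff_iff_mem_of_isCircuit hC (hCD.trans (insert_comm ..).subset)
      (by simp [hpq.symm, hqD]) (mem_insert p D)).2 hp
    rwa [insert_sdiff_self_of_notMem hpD] at this
  exact ⟨exchange hpq hCD hp hpD hqD, exchange hpq.symm (insert_comm p q D ▸ hCD) hq hqD hpD⟩

end Matroid

theorem stmt_6_general (M : Matroid α) {A B Ca' Cb : Set α} {a a' b : α}
    (hA : M.IsBase A) (hB : M.IsBase B) (hAB : Disjoint A B)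
    (ha : a ∈ A) (hb : b ∈ SymEx M a A B)
    (ha' : a' ∈ A)
    (hCa' : IsFundCct M Ca' a' B) (hCb : IsFundCct M Cb b A)
    (h1 : b ∉ Ca') (h2 : a' ∉ Cb) :
    SymEx M a' (insert b (A \ {a})) (insert a (B \ {b})) = SymEx M a' A B := by
  obtain ⟨hbB, hA', hB'⟩ := hb
  obtain ⟨hCb, hbCb, hCbA⟩ := hCb
  obtain ⟨hCa', -, hCa'B⟩ := hCa'
  rw [isCircuit_iff_matroid_isCircuit] at hCb hCa'
  have hbA : b ∉ A := hAB.notMem_of_mem_right hbB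
  have haCb : a ∈ Cb := (hA.isBase_insert_sdiff_iff_mem_of_isCircuit hCb hCbA hbA ha).1 hA'
  have ha'a : a' ≠ a := fun h ↦ h2 (h ▸ haCb)
  have hA'a' : ¬ M.IsBase (insert b (A \ {a'})) :=
    mt (hA.isBase_insert_sdiff_iff_mem_of_isCircuit hCb hCbA hbA ha').1 h2
  have ha'B : a' ∉ B := hAB.notMem_of_mem_left ha'
  have hBx : ∀ x ∈ B, x ≠ b →
      (M.IsBase (insert a' (insert a (B \ {b}) \ {x})) ↔ M.IsBase (insert a' (B \ {x}))) := by
    intro x hx hxb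
    have hCa'B' : Ca' ⊆ insert a' (insert a (B \ {b})) := fun y hy ↦ by
      have := hCa'B hy
      grind
    rw [hB.isBase_insert_sdiff_iff_mem_of_isCircuit hCa' hCa'B ha'B hx,
      hB'.isBase_insert_sdiff_iff_mem_of_isCircuit hCa' hCa'B' (by grind) (by grind)]
  have hAx : ∀ x ∈ B, x ≠ b →
      (M.IsBase (insert x (insert b (A \ {a}) \ {a'})) ↔ M.IsBase (insert x (A \ {a'}))) := by
    intro x hx hxb
    have hxA : x ∉ A := hAB.notMem_of_mem_right hx
    rw [show insert x (insert b (A \ {a}) \ {a'}) = insert b (insert x (A \ {a, a'})) by grind,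
      show insert x (A \ {a'}) = insert a (insert x (A \ {a, a'})) by grind]
    refine (hCb.isBase_insert_iff_isBase_insert (fun y hy ↦ ?_) haCb hbCb (by grind) (by grind)).symm
    have := hCbA hy
    grind
  ext x
  simp only [SymEx, mem_ofPred_eq]
  obtain rfl | hxa := eq_or_ne x a
  · rw [show insert x (insert b (A \ {x}) \ {a'}) = insert b (A \ {a'}) by grind]
    simp [hA'a', hAB.notMem_of_mem_left ha]
  obtain rfl | hxb := eq_or_ne x b
  · simp [hA'a', hxa]
  rw [show x ∈ insert a (B \ {b}) ↔ x ∈ B by simp [hxa, hxb]]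
  exact and_congr_right fun hx ↦ and_congr (hAx x hx hxb) (hBx x hx hxb)

theorem stmt_6 (M : Matroid α) [M.Finite] {A B Ca' Cb : Set α} {a a' b : α}
    (hA : M.IsBase A) (hB : M.IsBase B) (hAB : Disjoint A B)
    (ha : a ∈ A) (hb : b ∈ SymEx M a A B)
    (ha' : a' ∈ A) (hne : a' ≠ a)
    (hCa' : IsFundCct M Ca' a' B) (hCb : IsFundCct M Cb b A)
    (h1 : b ∉ Ca') (h2 : a' ∉ Cb) :
    SymEx M a' (insert b (A \ {a})) (insert a (B \ {b})) = SymEx M a' A B :=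
  stmt_6_general M hA hB hAB ha hb ha' hCa' hCb h1 h2
end

section
/- Let A and B be disjoint bases of a matroid M, let a ∈ A, and let b ∈ Sym(a,A,B); set A' := A - a + b and B' := B - b + a. Let a' ∈ A - a. If b ∈ C(a',B) and a' ∉ C(b,A), then Sym(a',A,B) △ Conn(a,a',A,B) ⊆ Sym(a',A',B') ⊆ Sym(a',A,B) ∪ Conn(a,a',A,B). -/
open Set

variable {α : Type*}

/-!
Write `A' = A - a + b` and `B' = B - b + a`. Since `a' ∉ C(b, A)`, `b` lies in the closure of
`A - a'`, but not in that of `A - a - a'` (as `A'` is independent); hence `A - a'` and `A' - a'`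
span the same hyperplane, and an element `y ∈ B - b` completes one of them to a base iff it
completes the other.

For `y ∈ B - b` let `G = B - b - y`. The sets `B - y + a'`, `B - y + a` and `B' - y + a'` are
bases iff `{b, a'}`, `{b, a}` and `{a, a'}` are non-parallel pairs in `M / G`, where `a` and `a'`
are non-loops of `M / G` because `B'` and `B - b + a'` are bases (the latter as `b ∈ C(a', B)`).
Since parallelism is transitive, if exactly one of the first two pairs is parallel then the third
is not, and if the third is not parallel then neither are both of the first two.
-/

namespace Matroid

variable {M : Matroid α} {B I X : Set α} {a b c x y z : α}

lemma IsBase.isBase_insert_sdiff_singleton_iff (hB : M.IsBase B) (hx : x ∈ B) :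
    M.IsBase (insert y (B \ {x})) ↔ y ∈ M.E \ M.closure (B \ {x}) := by
  have hI : M.Indep (B \ {x}) := hB.indep.subset sdiff_subset
  refine ⟨fun h ↦ (hI.insert_indep_iff.1 h.indep).resolve_right fun hy ↦ ?_, fun hy ↦ ?_⟩
  · rw [insert_eq_of_mem hy] at h
    exact (sdiff_singleton_ssubset.2 hx).ne (h.eq_of_subset_isBase hB sdiff_subset)
  obtain rfl | hyx := eq_or_ne y x
  · rwa [insert_sdiff_singleton, insert_eq_of_mem hx]
  have hyI : y ∉ B \ {x} := fun h ↦ hy.2 (M.mem_closure_of_mem' h hy.1)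
  exact hB.exchange_isBase_of_indep (fun hyB ↦ hyI ⟨hyB, hyx⟩)
    ((hI.insert_indep_iff_of_notMem hyI).2 hy)

lemma closure_insert_sdiff_sdiff_eq (hbX : b ∈ M.closure (X \ {c}))
    (hbX' : b ∉ M.closure (X \ {a})) (hbc : b ≠ c) (haX : a ∈ X) (hac : a ≠ c) :
    M.closure (insert b (X \ {a}) \ {c}) = M.closure (X \ {c}) := by
  have hX : insert a ((X \ {c}) \ {a}) = X \ {c} := by
    rw [insert_sdiff_singleton, insert_eq_of_mem (show a ∈ X \ {c} from ⟨haX, hac⟩)]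
  have hbD : b ∉ M.closure ((X \ {c}) \ {a}) := fun h ↦
    hbX' (M.closure_subset_closure (sdiff_subset_sdiff_left sdiff_subset) h)
  rw [← insert_sdiff_singleton_comm hbc, Set.sdiff_sdiff_comm,
    closure_insert_congr (f := a) ⟨by rwa [hX], hbD⟩, hX]

lemma notMem_closure_insert_of_xor (hx : x ∉ M.closure I) (hz : z ∉ M.closure I)
    (h : Xor (z ∉ M.closure (insert y I)) (x ∉ M.closure (insert y I))) :
    z ∉ M.closure (insert x I) := by
  rcases h with ⟨hzy, hxy⟩ | ⟨hxy, hzy⟩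
  · rwa [closure_insert_congr ⟨not_not.1 hxy, hx⟩]
  · exact fun hzx ↦
      hxy (closure_insert_congr ⟨not_not.1 hzy, hz⟩ ▸ mem_closure_insert hz hzx)

lemma notMem_closure_insert_or (hx : x ∉ M.closure I) (h : z ∉ M.closure (insert x I)) :
    z ∉ M.closure (insert y I) ∨ x ∉ M.closure (insert y I) := by
  by_contra! hxz
  exact h (closure_insert_congr ⟨hxz.2, hx⟩ ▸ hxz.1)

lemma IsBase.isBase_insert_sdiff_xor {a a' b e : α} (hB : M.IsBase B)
    (hBa : M.IsBase (insert a (B \ {b}))) (hBa' : M.IsBase (insert a' (B \ {b})))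
    (haB : a ∉ B) (ha'B : a' ∉ B) (hbB : b ∈ B) (heB : e ∈ B) (heb : e ≠ b) :
    (Xor (M.IsBase (insert a' (B \ {e}))) (M.IsBase (insert a (B \ {e}))) →
      M.IsBase (insert a' (insert a (B \ {b}) \ {e}))) ∧
    (M.IsBase (insert a' (insert a (B \ {b}) \ {e})) →
      M.IsBase (insert a' (B \ {e})) ∨ M.IsBase (insert a (B \ {e}))) := by
  have hBe : B \ {e} = insert b ((B \ {b}) \ {e}) := by
    rw [Set.sdiff_sdiff_comm, insert_sdiff_singleton,
      insert_eq_of_mem (show b ∈ B \ {e} from ⟨hbB, heb.symm⟩)]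
  have hBae : insert a (B \ {b}) \ {e} = insert a ((B \ {b}) \ {e}) :=
    (insert_sdiff_singleton_comm (by rintro rfl; exact haB heB) _).symm
  have notMem_closure {x : α} (hx : M.IsBase (insert x (B \ {b}))) (hxB : x ∉ B) :
      x ∉ M.closure ((B \ {b}) \ {e}) := fun h ↦ hx.indep.notMem_closure_sdiff_of_mem
    (mem_insert x _) (M.closure_subset_closure (fun z hz ↦
      (⟨.inr hz.1, fun hzx ↦ hxB (hzx ▸ hz.1.1)⟩ : z ∈ insert x (B \ {b}) \ {x})) h)
  rw [hB.isBase_insert_sdiff_singleton_iff heB, hB.isBase_insert_sdiff_singleton_iff heB,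
    hBa.isBase_insert_sdiff_singleton_iff (mem_insert_of_mem _ ⟨heB, heb⟩), hBe, hBae]
  simp only [mem_sdiff, hBa.subset_ground (mem_insert a _),
    hBa'.subset_ground (mem_insert a' _), true_and]
  exact ⟨notMem_closure_insert_of_xor (notMem_closure hBa haB) (notMem_closure hBa' ha'B),
    notMem_closure_insert_or (notMem_closure hBa haB)⟩

end Matroid

namespace IsFundCct

variable {M : Matroid α} {B C : Set α} {x y : α}

lemma mem_closure_sdiff (h : IsFundCct M C x B) (hy : y ∉ C) : x ∈ M.closure (B \ {y}) :=
  M.closure_subset_closure (fun z hz ↦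
    (⟨(h.2.2 hz.1).resolve_left hz.2, fun hzy ↦ hy (hzy ▸ hz.1)⟩ : z ∈ B \ {y}))
    (h.1.isCircuit.mem_closure_sdiff_singleton_of_mem h.2.1)

lemma isBase_insert_sdiff (h : IsFundCct M C x B) (hB : M.IsBase B) (hy : y ∈ C) (hxy : x ≠ y) :
    M.IsBase (insert x (B \ {y})) := by
  rw [insert_sdiff_singleton_comm hxy]
  refine hB.isBase_insert_sdiff_of_mem_closure ?_ (h.2.2 hy)
  exact M.closure_subset_closure (sdiff_subset_sdiff_left h.2.2)
    (h.1.isCircuit.mem_closure_sdiff_singleton_of_mem hy)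

end IsFundCct

section SymEx

variable {M : Matroid α} {A B : Set α} {a x y : α}

lemma mem_symmDiff_symEx_connEx :
    y ∈ symmDiff (SymEx M x A B) (ConnEx M a x A B) ↔
      y ∈ B ∧ M.IsBase (insert y (A \ {x})) ∧
        Xor (M.IsBase (insert x (B \ {y}))) (M.IsBase (insert a (B \ {y}))) := by
  simp only [Set.mem_symmDiff, SymEx, ConnEx, mem_ofPred_eq, Xor]
  tauto

lemma mem_symEx_union_connEx :
    y ∈ SymEx M x A B ∪ ConnEx M a x A B ↔ y ∈ B ∧ M.IsBase (insert y (A \ {x})) ∧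
      (M.IsBase (insert x (B \ {y})) ∨ M.IsBase (insert a (B \ {y}))) := by
  simp only [mem_union, SymEx, ConnEx, mem_ofPred_eq]
  tauto

end SymEx

theorem stmt_7_general (M : Matroid α) {A B Ca' Cb : Set α} {a a' b : α}
    (hA : M.IsBase A) (hB : M.IsBase B) (hAB : Disjoint A B)
    (ha : a ∈ A) (hb : b ∈ SymEx M a A B)
    (ha' : a' ∈ A) (hne : a' ≠ a)
    (hCa' : IsFundCct M Ca' a' B) (hCb : IsFundCct M Cb b A)
    (h1 : b ∈ Ca') (h2 : a' ∉ Cb) :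
    symmDiff (SymEx M a' A B) (ConnEx M a a' A B)
        ⊆ SymEx M a' (insert b (A \ {a})) (insert a (B \ {b})) ∧
      SymEx M a' (insert b (A \ {a})) (insert a (B \ {b}))
        ⊆ SymEx M a' A B ∪ ConnEx M a a' A B := by
  obtain ⟨hbB, hA', hB'⟩ := hb
  have hbA : b ∉ A := disjoint_right.1 hAB hbB
  have hba' : b ≠ a' := fun h ↦ hbA (h ▸ ha')
  have hbcl : b ∈ M.closure (A \ {a'}) := hCb.mem_closure_sdiff h2
  have hcl : M.closure (insert b (A \ {a}) \ {a'}) = M.closure (A \ {a'}) := by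
    refine Matroid.closure_insert_sdiff_sdiff_eq hbcl (fun h ↦ ?_) hba' ha hne.symm
    exact hA'.indep.notMem_closure_sdiff_of_mem (mem_insert b _)
      (by rwa [insert_sdiff_self_of_notMem (fun h ↦ hbA h.1)])
  have hA'_iff (y : α) :
      M.IsBase (insert y (insert b (A \ {a}) \ {a'})) ↔ y ∈ M.E \ M.closure (A \ {a'}) := by
    rw [hA'.isBase_insert_sdiff_singleton_iff (mem_insert_of_mem _ ⟨ha', hne⟩), hcl]
  have hB_xor {y : α} (hyB : y ∈ B) (hyb : y ≠ b) :=
    hB.isBase_insert_sdiff_xor hB' (hCa'.isBase_insert_sdiff hB h1 hba'.symm)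
      (disjoint_left.1 hAB ha) (disjoint_left.1 hAB ha') hbB hyB hyb
  constructor
  · intro y hy
    obtain ⟨hyB, hyA, hxor⟩ := mem_symmDiff_symEx_connEx.1 hy
    rw [hA.isBase_insert_sdiff_singleton_iff ha'] at hyA
    have hyb : y ≠ b := by rintro rfl; exact hyA.2 hbcl
    exact ⟨mem_insert_of_mem _ ⟨hyB, hyb⟩, (hA'_iff y).2 hyA, (hB_xor hyB hyb).1 hxor⟩
  · rintro y ⟨rfl | ⟨hyB, hyb⟩, hyA, hr⟩
    · exact (((hA'_iff _).1 hyA).2 <|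
        M.mem_closure_of_mem' ⟨ha, hne.symm⟩ (hA.subset_ground ha)).elim
    · rw [hA'_iff, ← hA.isBase_insert_sdiff_singleton_iff ha'] at hyA
      exact mem_symEx_union_connEx.2 ⟨hyB, hyA, (hB_xor hyB hyb).2 hr⟩

theorem stmt_7 (M : Matroid α) [M.Finite] {A B Ca' Cb : Set α} {a a' b : α}
    (hA : M.IsBase A) (hB : M.IsBase B) (hAB : Disjoint A B)
    (ha : a ∈ A) (hb : b ∈ SymEx M a A B)
    (ha' : a' ∈ A) (hne : a' ≠ a)
    (hCa' : IsFundCct M Ca' a' B) (hCb : IsFundCct M Cb b A)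
    (h1 : b ∈ Ca') (h2 : a' ∉ Cb) :
    symmDiff (SymEx M a' A B) (ConnEx M a a' A B)
        ⊆ SymEx M a' (insert b (A \ {a})) (insert a (B \ {b})) ∧
      SymEx M a' (insert b (A \ {a})) (insert a (B \ {b}))
        ⊆ SymEx M a' A B ∪ ConnEx M a a' A B :=
  stmt_7_general M hA hB hAB ha hb ha' hne hCa' hCb h1 h2
end

section
/- Let A and B be disjoint bases of a matroid M, let a ∈ A, and let b ∈ Sym(a,A,B); set A' := A - a + b and B' := B - b + a. Let a' ∈ A - a. If b ∉ C(a',B) and a' ∈ C(b,A), then Sym(a',A,B) △ Conn(a',a,A,B) ⊆ Sym(a',A',B') ⊆ Sym(a',A,B) ∪ Conn(a',a,A,B). -/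
open Set

variable {α : Type*}

/-!
For `y ∈ B`, membership in each of the three exchange sets reduces to `y ∈ C(a', B)` together
with a closure condition: `y ∉ cl(A - a')`, `y ∉ cl(A - a)` and `y ∉ cl(A - a - a' + b)`
respectively (`C(a', B)` is also the fundamental circuit of `a'` for `B - b + a`, as
`b ∉ C(a', B)`). Since `A` is independent, `cl(A - a) ∩ cl(A - a') = cl(A - a - a')`, which gives
the second inclusion. For the first, `b` lies in neither `cl(A - a)` nor `cl(A - a')`, so by the
exchange property any `y ∈ cl(A - a - a' + b)` lies in both closures or in neither.
-/

lemma Set.mem_insert_sdiff_and_mem_iff {s t : Set α} {a b x : α} (ha : a ∉ t) (hb : b ∉ t) :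
    x ∈ insert a (s \ {b}) ∧ x ∈ t ↔ x ∈ s ∧ x ∈ t := by
  grind

namespace Matroid

variable {M : Matroid α} {X Y : Set α} {b e f y : α}

lemma IsBase.insert_sdiff_isBase_iff (hX : M.IsBase X) (he : e ∈ X) (hf : f ∈ M.E) :
    M.IsBase (insert f (X \ {e})) ↔ f ∉ M.closure (X \ {e}) := by
  refine ⟨fun hbase hcl ↦ ?_, fun hcl ↦ hX.exchange_base_of_notMem_closure he hcl⟩
  apply hX.indep.notMem_closure_sdiff_of_mem he
  rw [← closure_insert_eq_of_mem_closure hcl, hbase.closure_eq]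
  exact hX.subset_ground he

lemma mem_closure_iff_of_mem_closure_insert (hbX : b ∉ M.closure X) (hYX : Y ⊆ X)
    (hy : y ∈ M.closure (insert b Y)) : y ∈ M.closure X ↔ y ∈ M.closure Y := by
  refine ⟨fun hyX ↦ by_contra fun hyY ↦ hbX ?_, fun hyY ↦ M.closure_subset_closure hYX hyY⟩
  have hb : b ∈ M.closure (insert y Y) := (closure_exchange ⟨hy, hyY⟩).1
  rw [← closure_insert_eq_of_mem_closure hyX]
  exact M.closure_subset_closure (insert_subset_insert hYX) hb

lemma mem_closure_iff_of_mem_closure_insert_inter (hbX : b ∉ M.closure X)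
    (hbY : b ∉ M.closure Y) (hy : y ∈ M.closure (insert b (X ∩ Y))) :
    y ∈ M.closure X ↔ y ∈ M.closure Y := by
  rw [mem_closure_iff_of_mem_closure_insert hbX inter_subset_left hy,
    mem_closure_iff_of_mem_closure_insert hbY inter_subset_right hy]

end Matroid

section ExchangeSets

variable {M : Matroid α} {A B C X : Set α} {a b e x x' y : α}

lemma isCircuit_iff_isCircuit : IsCircuit M C ↔ M.IsCircuit C :=
  Matroid.isCircuit_iff_forall_ssubset.symm

lemma IsFundCct.isBase_insert_sdiff_iff (hC : IsFundCct M C e X) (hX : M.IsBase X)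
    (heX : e ∉ X) (hy : y ∈ X) : M.IsBase (insert e (X \ {y})) ↔ y ∈ C := by
  have hCc : M.IsCircuit C := isCircuit_iff_isCircuit.mp hC.1
  have hecl : e ∈ M.closure X := hX.closure_eq ▸ hCc.subset_ground hC.2.1
  rw [hCc.eq_fundCircuit_of_subset hX.indep hC.2.2, hX.indep.mem_fundCircuit_iff hecl heX,
    ← insert_sdiff_singleton_comm (ne_of_mem_of_not_mem hy heX).symm]
  exact ⟨Matroid.IsBase.indep, hX.exchange_isBase_of_indep heX⟩

lemma IsFundCct.exchange (hC : IsFundCct M C e X) (hb : b ∉ C) :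
    IsFundCct M C e (insert a (X \ {b})) :=
  ⟨hC.1, hC.2.1, fun _ hz ↦ (hC.2.2 hz).imp_right fun hzX ↦ .inr ⟨hzX, ne_of_mem_of_not_mem hz hb⟩⟩

lemma mem_connEx_iff (hA : M.IsBase A) (hB : M.IsBase B) (hx' : x' ∈ A) (hx : x ∉ B)
    (hC : IsFundCct M C x B) :
    y ∈ ConnEx M x x' A B ↔ y ∈ B ∧ y ∈ C ∧ y ∉ M.closure (A \ {x'}) := by
  refine and_congr_right fun hy ↦ ?_
  rw [hA.insert_sdiff_isBase_iff hx' (hB.subset_ground hy), hC.isBase_insert_sdiff_iff hB hx hy,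
    and_comm]

lemma mem_symEx_iff (hA : M.IsBase A) (hB : M.IsBase B) (hx : x ∈ A) (hxB : x ∉ B)
    (hC : IsFundCct M C x B) :
    y ∈ SymEx M x A B ↔ y ∈ B ∧ y ∈ C ∧ y ∉ M.closure (A \ {x}) :=
  mem_connEx_iff hA hB hx hxB hC

end ExchangeSets

theorem stmt_8_general (M : Matroid α) {A B Ca' Cb : Set α} {a a' b : α}
    (hA : M.IsBase A) (hB : M.IsBase B) (hAB : Disjoint A B)
    (ha : a ∈ A) (hb : b ∈ SymEx M a A B)
    (ha' : a' ∈ A) (hne : a' ≠ a)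
    (hCa' : IsFundCct M Ca' a' B) (hCb : IsFundCct M Cb b A)
    (h1 : b ∉ Ca') (h2 : a' ∈ Cb) :
    symmDiff (SymEx M a' A B) (ConnEx M a' a A B)
        ⊆ SymEx M a' (insert b (A \ {a})) (insert a (B \ {b})) ∧
      SymEx M a' (insert b (A \ {a})) (insert a (B \ {b}))
        ⊆ SymEx M a' A B ∪ ConnEx M a' a A B := by
  obtain ⟨hbB, hA'b, hB'b⟩ := hb
  have hbA : b ∉ A := disjoint_right.mp hAB hbB
  have ha'B : a' ∉ B := disjoint_left.mp hAB ha'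
  have haCa' : a ∉ Ca' := fun h ↦ (hCa'.2.2 h).elim hne.symm (disjoint_left.mp hAB ha)
  have ha'B' : a' ∉ insert a (B \ {b}) := by simp [hne, ha'B]
  have hbE : b ∈ M.E := hB.subset_ground hbB
  have hbA_a : b ∉ M.closure (A \ {a}) := (hA.insert_sdiff_isBase_iff ha hbE).mp hA'b
  have hbA_a' : b ∉ M.closure (A \ {a'}) :=
    (hA.insert_sdiff_isBase_iff ha' hbE).mp ((hCb.isBase_insert_sdiff_iff hA hbA ha').mpr h2)
  have hA'a' : insert b (A \ {a}) \ {a'} = insert b ((A \ {a}) ∩ (A \ {a'})) := by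
    rw [← insert_sdiff_singleton_comm (ne_of_mem_of_not_mem ha' hbA).symm, sdiff_sdiff,
      sdiff_inter_sdiff]
  have hclosure_inter : ∀ y ∈ M.closure (A \ {a}), y ∈ M.closure (A \ {a'}) →
      y ∈ M.closure (insert b ((A \ {a}) ∩ (A \ {a'}))) := fun y hya hya' ↦ by
    refine M.closure_subset_closure (subset_insert _ _) ?_
    rw [(hA.indep.subset (union_subset sdiff_subset sdiff_subset)).closure_inter_eq_inter_closure]
    exact ⟨hya, hya'⟩
  simp only [subset_def, mem_symmDiff, mem_union, mem_symEx_iff hA hB ha' ha'B hCa',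
    mem_connEx_iff hA hB ha ha'B hCa', ← and_assoc, hA'a',
    mem_symEx_iff hA'b hB'b (.inr ⟨ha', hne⟩) ha'B' (hCa'.exchange h1),
    mem_insert_sdiff_and_mem_iff haCa' h1]
  refine ⟨fun y hy ↦ ⟨by tauto, fun hy' ↦ ?_⟩, fun y hy ↦ ?_⟩
  · have hiff := Matroid.mem_closure_iff_of_mem_closure_insert_inter hbA_a hbA_a' hy'
    tauto
  · have hboth := hclosure_inter y
    tauto

theorem stmt_8 (M : Matroid α) [M.Finite] {A B Ca' Cb : Set α} {a a' b : α}
    (hA : M.IsBase A) (hB : M.IsBase B) (hAB : Disjoint A B)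
    (ha : a ∈ A) (hb : b ∈ SymEx M a A B)
    (ha' : a' ∈ A) (hne : a' ≠ a)
    (hCa' : IsFundCct M Ca' a' B) (hCb : IsFundCct M Cb b A)
    (h1 : b ∉ Ca') (h2 : a' ∈ Cb) :
    symmDiff (SymEx M a' A B) (ConnEx M a' a A B)
        ⊆ SymEx M a' (insert b (A \ {a})) (insert a (B \ {b})) ∧
      SymEx M a' (insert b (A \ {a})) (insert a (B \ {b}))
        ⊆ SymEx M a' A B ∪ ConnEx M a' a A B :=
  stmt_8_general M hA hB hAB ha hb ha' hne hCa' hCb h1 h2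
end
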